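/- arXiv:2006.14206 — 10 statements merged into one kernel-verified Lean document; each statement's English description precedes it below -/
import Mathlib

section
/- Let q ≡ 2 (mod 3) be a prime power. If z ∈ F_{q³}* satisfies Tr_{q³/q}(z) = 0, then Tr_{q³/q}(z^{1+q}) ≠ 0. -/
theorem trace_pow_one_add_q_ne_zero (q : ℕ) (hq : q % 3 = 2)
    (K : Type) [Field K] [Fintype K] (hK : Fintype.card K = q ^ 3)
    (z : K) (hz : z ≠ 0) (htr : z + z ^ q + z ^ q ^ 2 = 0) :
    z ^ (1 + q) + (z ^ (1 + q)) ^ q + (z ^ (1 + q)) ^ q ^ 2 ≠ 0 := by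
  intro h
  -- q = m + 1 with m ≥ 1
  obtain ⟨m, rfl⟩ : ∃ m, q = m + 1 := ⟨q - 1, by omega⟩
  set q := m + 1 with hqdef
  -- Frobenius: z ^ q ^ 3 = z
  have hz3 : z ^ q ^ 3 = z := by
    rw [← hK]; exact FiniteField.pow_card z
  -- rewrite h as elementary symmetric e2 = 0
  have e1 : z ^ (1 + q) = z * z ^ q := by rw [pow_add, pow_one]
  have e2 : (z ^ (1 + q)) ^ q = z ^ q * z ^ q ^ 2 := by
    rw [← pow_mul, show (1 + q) * q = q + q ^ 2 by ring, pow_add]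
  have e3 : (z ^ (1 + q)) ^ q ^ 2 = z ^ q ^ 2 * z := by
    rw [← pow_mul, show (1 + q) * q ^ 2 = q ^ 2 + q ^ 3 by ring, pow_add, hz3]
  rw [e2, e3, e1] at h
  -- key: z^3 = (z^q)^3
  have key : z ^ 3 = (z ^ q) ^ 3 := by
    linear_combination (z ^ 2 - (z ^ q) ^ 2) * htr + (z ^ q - z) * h
  -- hence z^(3m) = 1
  have h3m : z ^ (3 * m) = 1 := by
    have h1 : z ^ (3 * m) * z ^ 3 = 1 * z ^ 3 := by
      rw [one_mul, ← pow_add, show 3 * m + 3 = q * 3 by omega, pow_mul]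
      exact key.symm
    exact mul_right_cancel₀ (pow_ne_zero 3 hz) h1
  -- order divides q^3 - 1 as well
  have hcard : z ^ (q ^ 3 - 1) = 1 := by
    rw [← hK]; exact FiniteField.pow_card_sub_one_eq_one z hz
  have hfact : q ^ 3 - 1 = m * (q ^ 2 + q + 1) := by
    have : m * (q ^ 2 + q + 1) + 1 = q ^ 3 := by rw [hqdef]; ring
    omega
  have hq2mod : q ^ 2 % 3 = 1 := by
    rw [Nat.pow_mod, hq]
  have hgcd3 : Nat.gcd 3 (q ^ 2 + q + 1) = 1 := by
    rw [Nat.gcd_rec, show (q ^ 2 + q + 1) % 3 = 1 by omega]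
    rfl
  have hgcd : Nat.gcd (3 * m) (q ^ 3 - 1) = m := by
    rw [hfact, show 3 * m = m * 3 by ring, Nat.gcd_mul_left, hgcd3, mul_one]
  have hordm : orderOf z ∣ m := by
    rw [← hgcd]
    exact Nat.dvd_gcd (orderOf_dvd_of_pow_eq_one h3m)
      (orderOf_dvd_of_pow_eq_one hcard)
  have hzm : z ^ m = 1 := orderOf_dvd_iff_pow_eq_one.mp hordm
  have hzq : z ^ q = z := by rw [hqdef, pow_succ, hzm, one_mul]
  have hzq2 : z ^ q ^ 2 = z := by rw [pow_two, pow_mul, hzq, hzq]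
  rw [hzq, hzq2] at htr
  -- so 3 * z = 0, so char = 3, contradiction with q % 3 = 2
  have h3z : (3 : K) * z = 0 := by linear_combination htr
  have h3 : (3 : K) = 0 := by
    rcases mul_eq_zero.mp h3z with h | h
    · exact h
    · exact absurd h hz
  -- derive 3 ∣ q
  have hp := ringChar.charP K
  have hprime : (ringChar K).Prime := CharP.char_is_prime K (ringChar K)
  have hdvd3 : ringChar K ∣ 3 := by
    have := (CharP.cast_eq_zero_iff K (ringChar K) 3).mp (by exact_mod_cast h3)
    exact this
  have hchar3 : ringChar K = 3 := by
    rcases (Nat.prime_dvd_prime_iff_eq hprime (by norm_num)).mp hdvd3 with h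
    exact h
  obtain ⟨n, -, hn⟩ := FiniteField.card K (ringChar K)
  rw [hchar3, hK] at hn
  have h3q : 3 ∣ q := by
    have h3q3 : (3 : ℕ) ∣ q ^ 3 := by
      rw [hn]; exact dvd_pow_self 3 n.ne_zero
    exact Nat.Prime.dvd_of_dvd_pow (by norm_num) h3q3
  omega
end

section
/- Let q ≡ 2 (mod 3) be a prime power. The set L₀ = {x ∈ F_{q³}* : Tr_{q³/q}(x) = 0 and N_{q³/q}(x) = 1} has exactly q+1 elements. -/
/-!
Let `φ x = x ^ q`, a ring endomorphism of `K = 𝔽_{q³}` of order dividing 3, whose fixed points are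
the roots of `X ^ q - X`. The trace `x + φ x + φ² x` is additive with values in the fixed points,
and its kernel consists of roots of a polynomial of degree `q²`. Since `q³ = #image · #kernel`,
there are exactly `q` fixed points and `q²` elements of trace zero. The norm maps the `q² - 1`
nonzero elements of trace zero onto nonzero fixed points, and because `q ≡ 2 (mod 3)` every fixed
point `c` is the cube of a fixed point `μ`; multiplication by `μ` then identifies the norm-`1`
fibre with the norm-`c` fibre. Hence `q² - 1 = (q - 1) · #L₀`.
-/

open Polynomial Finset

lemma Polynomial.card_le_natDegree_of_forall_isRoot {R : Type*} [CommRing R] [IsDomain R]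
    {p : R[X]} (hp : p ≠ 0) {s : Finset R} (hs : ∀ x ∈ s, p.IsRoot x) : #s ≤ p.natDegree :=
  card_le_degree_of_subset_roots fun x hx => (mem_roots hp).2 (hs x hx)

lemma AddMonoidHom.card_image_mul_card_ker {G M : Type*} [AddGroup G] [Fintype G] [AddGroup M]
    [DecidableEq M] (f : G →+ M) : #(univ.image f) * #{g | f g = 0} = Fintype.card G := by
  rw [← card_univ, card_eq_sum_card_image f univ, ← smul_eq_mul, ← sum_const]
  refine sum_congr rfl fun y hy => ?_
  obtain ⟨x, -, rfl⟩ := mem_image.1 hy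
  exact AddMonoidHom.card_fiber_eq_of_mem_range f ⟨0, map_zero f⟩ ⟨x, rfl⟩

section

variable {K : Type*} [Field K]

lemma exists_ringHom_eq_pow [Fintype K] {q m : ℕ} (hm : m ≠ 0) (hK : Fintype.card K = q ^ m) :
    ∃ φ : K →+* K, ∀ x, φ x = x ^ q := by
  obtain ⟨n, hp, hcard⟩ := FiniteField.card K (ringChar K)
  have : Fact (ringChar K).Prime := ⟨hp⟩
  obtain ⟨k, -, rfl⟩ := (Nat.dvd_prime_pow hp).mp (hcard ▸ hK ▸ dvd_pow_self q hm)
  exact ⟨iterateFrobenius K (ringChar K) k, fun x => iterateFrobenius_def ..⟩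

/- For `φ x = x ^ q` on `𝔽_{q³}`, `relTrace φ` and `relNorm φ` are `Tr_{q³/q}` and `N_{q³/q}`. -/

def relTrace (φ : K →+* K) : K →+ K :=
  AddMonoidHom.id K + φ.toAddMonoidHom + (φ.comp φ).toAddMonoidHom

def relNorm (φ : K →+* K) : K →* K :=
  MonoidHom.id K * φ.toMonoidHom * (φ.comp φ).toMonoidHom

section RelTraceNorm

variable {φ : K →+* K}

variable (φ) in
lemma relTrace_apply (x : K) : relTrace φ x = x + φ x + φ (φ x) := rfl

variable (φ) in
lemma relNorm_apply (x : K) : relNorm φ x = x * φ x * φ (φ x) := rfl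

lemma map_relTrace (hφ : ∀ x, φ (φ (φ x)) = x) (x : K) : φ (relTrace φ x) = relTrace φ x := by
  simp only [relTrace_apply, map_add, hφ]
  ring

lemma map_relNorm (hφ : ∀ x, φ (φ (φ x)) = x) (x : K) : φ (relNorm φ x) = relNorm φ x := by
  simp only [relNorm_apply, map_mul, hφ]
  ring

lemma relTrace_mul_of_map_eq {c : K} (hc : φ c = c) (x : K) :
    relTrace φ (c * x) = c * relTrace φ x := by
  simp only [relTrace_apply, map_mul, hc]
  ring

lemma relNorm_mul_of_map_eq {c : K} (hc : φ c = c) (x : K) :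
    relNorm φ (c * x) = c ^ 3 * relNorm φ x := by
  simp only [relNorm_apply, map_mul, hc]
  ring

end RelTraceNorm

section Frobenius

variable {q : ℕ} {φ : K →+* K}

lemma relTrace_eq_pow (hφ : ∀ x, φ x = x ^ q) (x : K) :
    relTrace φ x = x + x ^ q + x ^ q ^ 2 := by
  rw [relTrace_apply, hφ, hφ, ← pow_mul, sq]

lemma relNorm_eq_pow (hφ : ∀ x, φ x = x ^ q) (x : K) :
    relNorm φ x = x ^ (1 + q + q ^ 2) := by
  rw [relNorm_apply, hφ, hφ, ← pow_mul, pow_add, pow_add, pow_one, sq]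

lemma map_map_map_eq_self [Fintype K] (hφ : ∀ x, φ x = x ^ q) (hK : Fintype.card K = q ^ 3)
    (x : K) : φ (φ (φ x)) = x := by
  rw [hφ, hφ, hφ, ← pow_mul, ← pow_mul, show q * (q * q) = Fintype.card K by rw [hK]; ring,
    FiniteField.pow_card]

/-- `(c ^ (2 * (q / 3) + 1)) ^ 3 = c ^ (2 * q - 1) = c` for a fixed point `c`. -/
lemma exists_cube_root_of_map_eq (hφ : ∀ x, φ x = x ^ q) (hq : q % 3 = 2) {c : K}
    (hc : φ c = c) : ∃ μ, φ μ = μ ∧ μ ^ 3 = c := by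
  refine ⟨c ^ (2 * (q / 3) + 1), by rw [map_pow, hc], ?_⟩
  rw [← pow_mul, show (2 * (q / 3) + 1) * 3 = (q - 1) + q by omega, pow_add, ← hφ, hc,
    ← pow_succ, Nat.sub_add_cancel (by omega), ← hφ, hc]

variable [Fintype K] [DecidableEq K]

lemma card_fixed_le (hφ : ∀ x, φ x = x ^ q) (hq : 2 ≤ q) : #{x | φ x = x} ≤ q := by
  have hdeg : (X : K[X]).degree < q := by rw [degree_X]; exact_mod_cast hq
  refine (card_le_natDegree_of_forall_isRoot (monic_X_pow_sub hdeg).ne_zero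
    fun x hx => ?_).trans ?_
  · rw [mem_filter, hφ] at hx
    simp [hx.2]
  · exact (natDegree_sub_le _ _).trans (by simp; omega)

lemma card_ker_relTrace_le (hφ : ∀ x, φ x = x ^ q) (hq : 2 ≤ q) :
    #{x | relTrace φ x = 0} ≤ q ^ 2 := by
  have hdeg : (X ^ q + X : K[X]).degree < ↑(q ^ 2) := by
    refine (degree_add_le _ _).trans_lt (max_lt ?_ ?_) <;>
      simp only [degree_X_pow, degree_X] <;> norm_cast <;> nlinarith
  refine (card_le_natDegree_of_forall_isRoot (monic_X_pow_add hdeg).ne_zero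
    fun x hx => ?_).trans ?_
  · rw [mem_filter, relTrace_eq_pow hφ] at hx
    simp only [IsRoot, eval_add, eval_pow, eval_X]
    linear_combination hx.2
  · rw [natDegree_add_eq_left_of_degree_lt (by rwa [degree_X_pow]), natDegree_X_pow]

/-- `q³ = #image · #kernel ≤ q · q²`, so both bounds are attained. -/
lemma card_ker_relTrace_and_card_fixed (hφ : ∀ x, φ x = x ^ q) (hq : 2 ≤ q)
    (hK : Fintype.card K = q ^ 3) :
    #{x | relTrace φ x = 0} = q ^ 2 ∧ #{x | φ x = x} = q := by
  have himage : #(univ.image (relTrace φ)) ≤ #{x | φ x = x} :=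
    card_le_card fun y hy => by
      obtain ⟨x, -, rfl⟩ := mem_image.1 hy
      simpa using map_relTrace (map_map_map_eq_self hφ hK) x
  have hprod := (relTrace φ).card_image_mul_card_ker
  have hker := card_ker_relTrace_le hφ hq
  have hfix := card_fixed_le hφ hq
  rw [hK] at hprod
  constructor <;> nlinarith

end Frobenius

def traceZeroNormFiber [Fintype K] [DecidableEq K] (φ : K →+* K) (c : K) : Finset K :=
  {x | x ≠ 0 ∧ relTrace φ x = 0 ∧ relNorm φ x = c}

section Fibers

variable [Fintype K] [DecidableEq K] {φ : K →+* K}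

lemma card_traceZeroNormFiber_cube {μ : K} (hμ : φ μ = μ) (hμ0 : μ ≠ 0) :
    #(traceZeroNormFiber φ (μ ^ 3)) = #(traceZeroNormFiber φ 1) := by
  have hμinv : φ μ⁻¹ = μ⁻¹ := by rw [map_inv₀, hμ]
  refine card_nbij' (μ⁻¹ * ·) (μ * ·) (fun x hx => ?_) (fun x hx => ?_)
    (fun x _ => mul_inv_cancel_left₀ hμ0 x) (fun x _ => inv_mul_cancel_left₀ hμ0 x)
  all_goals
    simp only [traceZeroNormFiber, coe_filter, mem_univ, true_and, Set.mem_ofPred_eq] at hx ⊢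
    obtain ⟨hx0, hxT, hxN⟩ := hx
    simp only [relTrace_mul_of_map_eq hμinv, relTrace_mul_of_map_eq hμ,
      relNorm_mul_of_map_eq hμinv, relNorm_mul_of_map_eq hμ, hxT, hxN, mul_zero, inv_pow,
      mul_one, ne_eq, mul_eq_zero, inv_eq_zero, hμ0, hx0]
    simp [hμ0]

lemma card_erase_ker_relTrace_eq_sum (hφ : ∀ x, φ (φ (φ x)) = x) :
    #(({x | relTrace φ x = 0} : Finset K).erase 0) =
      ∑ c ∈ ({c | φ c = c} : Finset K).erase 0, #(traceZeroNormFiber φ c) := by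
  refine card_eq_sum_card_fiberwise (f := relNorm φ) (fun x hx => ?_) |>.trans
    (sum_congr rfl fun c _ => congrArg card ?_)
  · simp only [mem_coe, mem_erase, mem_filter, mem_univ, true_and] at hx ⊢
    exact ⟨by simp [relNorm_apply, hx.1], map_relNorm hφ x⟩
  · ext x
    simp only [traceZeroNormFiber, mem_filter, mem_erase, mem_univ, true_and, and_assoc]

lemma card_traceZeroNormFiber_one {q : ℕ} (hφ : ∀ x, φ x = x ^ q) (hq : q % 3 = 2)
    (hK : Fintype.card K = q ^ 3) : #(traceZeroNormFiber φ 1) = q + 1 := by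
  obtain ⟨hker, hfix⟩ := card_ker_relTrace_and_card_fixed hφ (by omega) hK
  have hfibers : ∀ c ∈ ({c | φ c = c} : Finset K).erase 0,
      #(traceZeroNormFiber φ c) = #(traceZeroNormFiber φ 1) := by
    intro c hc
    simp only [mem_erase, mem_filter, mem_univ, true_and] at hc
    obtain ⟨μ, hμ, rfl⟩ := exists_cube_root_of_map_eq hφ hq hc.2
    exact card_traceZeroNormFiber_cube hμ (by rintro rfl; simp at hc)
  have hcount := card_erase_ker_relTrace_eq_sum (map_map_map_eq_self hφ hK)
  rw [sum_congr rfl hfibers, sum_const, smul_eq_mul, card_erase_of_mem (by simp),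
    card_erase_of_mem (by simp), hker, hfix] at hcount
  have : (q - 1) * #(traceZeroNormFiber φ 1) = (q - 1) * (q + 1) := by
    rw [← hcount, mul_comm, ← Nat.sq_sub_sq, one_pow]
  exact Nat.eq_of_mul_eq_mul_left (by omega) this

end Fibers

end

theorem card_L0 (q : ℕ) (hq : q % 3 = 2)
    (K : Type) [Field K] [Fintype K] (hK : Fintype.card K = q ^ 3) :
    {x : K | x ≠ 0 ∧ x + x ^ q + x ^ q ^ 2 = 0 ∧ x ^ (1 + q + q ^ 2) = 1}.ncard = q + 1 := by
  classical
  obtain ⟨φ, hφ⟩ := exists_ringHom_eq_pow three_ne_zero hK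
  rw [← card_traceZeroNormFiber_one hφ hq hK, ← Set.ncard_coe_finset]
  congr 1
  ext x
  simp [traceZeroNormFiber, relTrace_eq_pow hφ, relNorm_eq_pow hφ]
end

section
/- Let q ≡ 2 (mod 3) be a prime power, let T₀ = {x ∈ F_{q³}* : Tr_{q³/q}(x) = 0} and L₀ = {x ∈ T₀ : N_{q³/q}(x) = 1}. Then the set of products {x·λ : x ∈ L₀, λ ∈ F_q*} equals T₀, and the map (x, λ) ↦ xλ from L₀ × F_q* to T₀ is a bijection. -/
theorem L0_mul_Fq_star_eq_T0 (q : ℕ) (hq : q % 3 = 2)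
    (K : Type) [Field K] [Fintype K] (hK : Fintype.card K = q ^ 3) :
    (fun p : K × K => p.1 * p.2) ''
        (({x : K | x ≠ 0 ∧ x + x ^ q + x ^ q ^ 2 = 0 ∧ x ^ (1 + q + q ^ 2) = 1}) ×ˢ
          {y : K | y ≠ 0 ∧ y ^ q = y}) =
      {x : K | x ≠ 0 ∧ x + x ^ q + x ^ q ^ 2 = 0} ∧
    Set.BijOn (fun p : K × K => p.1 * p.2)
      (({x : K | x ≠ 0 ∧ x + x ^ q + x ^ q ^ 2 = 0 ∧ x ^ (1 + q + q ^ 2) = 1}) ×ˢ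
        {y : K | y ≠ 0 ∧ y ^ q = y})
      {x : K | x ≠ 0 ∧ x + x ^ q + x ^ q ^ 2 = 0} := by
  have hq2 : 2 ≤ q := by omega
  obtain ⟨k, hk⟩ : ∃ k, 3 * k = 1 + 2 * (q - 1) := ⟨(2 * q - 1) / 3, by omega⟩
  have hsub : q - 1 + 1 = q := by omega
  have pow_q_sub_one : ∀ a : K, a ≠ 0 → a ^ q = a → a ^ (q - 1) = 1 := by
    intro a ha haq
    have h := haq
    rw [← hsub, pow_succ] at h
    exact mul_right_cancel₀ ha (h.trans (one_mul a).symm)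
  have cube_root : ∀ a : K, a ≠ 0 → a ^ q = a → (a ^ 3) ^ k = a := by
    intro a ha haq
    have h1 : a ^ (q - 1) = 1 := pow_q_sub_one a ha haq
    rw [← pow_mul, hk, pow_add, pow_mul', h1, one_pow, mul_one, pow_one]
  have frob_fix_sq : ∀ a : K, a ^ q = a → a ^ q ^ 2 = a := by
    intro a haq
    rw [sq, pow_mul, haq, haq]
  have norm_mem : ∀ x : K, (x ^ (1 + q + q ^ 2)) ^ q = x ^ (1 + q + q ^ 2) := by
    intro x
    have hx3 : x ^ q ^ 3 = x := by rw [← hK]; exact FiniteField.pow_card x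
    rw [← pow_mul]
    have h1 : (1 + q + q ^ 2) * q = q + q ^ 2 + q ^ 3 := by ring
    rw [h1, pow_add, pow_add, hx3, pow_add, pow_add, pow_one]
    ring
  have trace_mul : ∀ x l : K, l ^ q = l →
      x * l + (x * l) ^ q + (x * l) ^ q ^ 2 = (x + x ^ q + x ^ q ^ 2) * l := by
    intro x l hl
    rw [mul_pow, mul_pow, hl, frob_fix_sq l hl]
    ring
  have lam_norm : ∀ l : K, l ^ q = l → l ^ (1 + q + q ^ 2) = l ^ 3 := by
    intro l hl
    rw [pow_add, pow_add, pow_one, hl, frob_fix_sq l hl]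
    ring
  have hbij : Set.BijOn (fun p : K × K => p.1 * p.2)
      (({x : K | x ≠ 0 ∧ x + x ^ q + x ^ q ^ 2 = 0 ∧ x ^ (1 + q + q ^ 2) = 1}) ×ˢ
        {y : K | y ≠ 0 ∧ y ^ q = y})
      {x : K | x ≠ 0 ∧ x + x ^ q + x ^ q ^ 2 = 0} := by
    refine ⟨?_, ?_, ?_⟩
    · -- MapsTo
      rintro ⟨x, l⟩ hp
      simp only [Set.mem_prod, Set.mem_setOf_eq] at hp ⊢
      obtain ⟨⟨hx0, hxt, _⟩, hl0, hlq⟩ := hp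
      exact ⟨mul_ne_zero hx0 hl0, by rw [trace_mul x l hlq, hxt, zero_mul]⟩
    · -- InjOn
      rintro ⟨x, l⟩ hp ⟨x', l'⟩ hp' heq
      simp only [Set.mem_prod, Set.mem_setOf_eq] at hp hp'
      obtain ⟨⟨hx0, hxt, hxn⟩, hl0, hlq⟩ := hp
      obtain ⟨⟨hx0', hxt', hxn'⟩, hl0', hlq'⟩ := hp'
      simp only at heq
      have h3 : l ^ 3 = l' ^ 3 := by
        have e1 : l ^ 3 = (x * l) ^ (1 + q + q ^ 2) := by
          rw [mul_pow, hxn, one_mul, lam_norm l hlq]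
        have e2 : l' ^ 3 = (x' * l') ^ (1 + q + q ^ 2) := by
          rw [mul_pow, hxn', one_mul, lam_norm l' hlq']
        rw [e1, e2, heq]
      have hll : l = l' := by
        rw [← cube_root l hl0 hlq, h3, cube_root l' hl0' hlq']
      subst hll
      have hxx : x = x' := mul_right_cancel₀ hl0 heq
      simp [hxx]
    · -- SurjOn
      rintro x hx
      simp only [Set.mem_setOf_eq] at hx
      obtain ⟨hx0, hxt⟩ := hx
      set c := x ^ (1 + q + q ^ 2) with hc
      have hc0 : c ≠ 0 := pow_ne_zero _ hx0
      have hcq : c ^ q = c := norm_mem x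
      set l := c ^ k with hl
      have hl0 : l ≠ 0 := pow_ne_zero _ hc0
      have hlq : l ^ q = l := by
        rw [hl, ← pow_mul, mul_comm, pow_mul, hcq]
      have hl3 : l ^ 3 = c := by
        rw [hl, ← pow_mul, mul_comm k 3, pow_mul]
        exact cube_root c hc0 hcq
      have hinvq : (l⁻¹) ^ q = l⁻¹ := by rw [inv_pow, hlq]
      refine ⟨⟨x * l⁻¹, l⟩, ?_, ?_⟩
      · simp only [Set.mem_prod, Set.mem_setOf_eq]
        refine ⟨⟨mul_ne_zero hx0 (inv_ne_zero hl0), ?_, ?_⟩, hl0, hlq⟩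
        · rw [trace_mul x l⁻¹ hinvq, hxt, zero_mul]
        · rw [mul_pow, inv_pow, lam_norm l hlq, hl3, ← hc, mul_inv_cancel₀ hc0]
      · simp only
        rw [mul_assoc, inv_mul_cancel₀ hl0, mul_one]
  exact ⟨hbij.image_eq, hbij⟩
end

section
/- Let q be an even prime power with q ≡ 2 (mod 3), and let x ∈ F_{q³}* satisfy Tr_{q³/q}(x) = 0 and N_{q³/q}(x) = 1. Set a = Tr_{q³/q}(x^{1+q}). Then Tr_{q/2}(a³) = 1, where Tr_{q/2} is the absolute trace from F_q to F₂. -/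
/-!
Since its trace is `0` and its norm is `1`, `x` is a root of `T³ + aT + 1`, whose coefficients lie
in `𝔽_q`, while `x ∉ 𝔽_q`. If the absolute trace of `c = a³` were `0`, then, `n` being odd,
`w = ∑_{k<n} ∑_{i<k} c^{2^i} ∈ 𝔽_q` would solve the Artin–Schreier equation `w² + w = c`.
Cubing is bijective on `𝔽_{q³}` because `3 ∤ q³ - 1`, so `w = s³` with `s ∈ 𝔽_q`, and then
`r = s + a/s ∈ 𝔽_q` is a root of `T³ + aT + 1`. The other two roots are roots of a quadratic over
`𝔽_q`, hence fixed by the square of the Frobenius `y ↦ y^q`, whose cube is the identity; so every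
root of the cubic, `x` included, would lie in `𝔽_q`.
-/

open Finset

section CharTwo

variable {R : Type*} [CommRing R] [CharP R 2]

lemma sq_sum_range_pow_two_pow_add (c : R) (k : ℕ) :
    (∑ i ∈ range k, c ^ 2 ^ i) ^ 2 + c = ∑ i ∈ range (k + 1), c ^ 2 ^ i := by
  rw [CharTwo.sum_sq, sum_range_succ', pow_zero, pow_one]
  simp only [← pow_mul, ← pow_succ]

lemma isIdempotentElem_sum_range_pow_two_pow {c : R} {n : ℕ} (hc : c ^ 2 ^ n = c) :
    IsIdempotentElem (∑ i ∈ range n, c ^ 2 ^ i) := by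
  rw [IsIdempotentElem, ← sq]
  have h := sq_sum_range_pow_two_pow_add c n
  rw [sum_range_succ, hc] at h
  exact add_right_cancel h

lemma sq_sum_range_sum_range_pow_two_pow (c : R) (n : ℕ) :
    (∑ k ∈ range n, ∑ i ∈ range k, c ^ 2 ^ i) ^ 2 =
      ∑ k ∈ range n, ∑ i ∈ range k, c ^ 2 ^ i + ∑ i ∈ range n, c ^ 2 ^ i + n * c := by
  set P : ℕ → R := fun k => ∑ i ∈ range k, c ^ 2 ^ i
  have hP : ∀ k, P k ^ 2 = P (k + 1) + c := fun k =>
    CharTwo.eq_add_iff_add_eq.mpr (sq_sum_range_pow_two_pow_add c k)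
  have hshift : ∑ k ∈ range n, P (k + 1) = ∑ k ∈ range n, P k + P n := by
    rw [← sum_range_succ, sum_range_succ']
    simp [P]
  rw [CharTwo.sum_sq, sum_congr rfl fun k _ => hP k, sum_add_distrib, hshift, sum_const,
    card_range, nsmul_eq_mul]

lemma exists_fixed_sq_add_self_eq {n : ℕ} (hn : Odd n) (φ : R →+* R) {c : R} (hc : φ c = c)
    (htr : ∑ i ∈ range n, c ^ 2 ^ i = 0) : ∃ w, φ w = w ∧ w ^ 2 + w = c := by
  refine ⟨∑ k ∈ range n, ∑ i ∈ range k, c ^ 2 ^ i, by simp [map_sum, hc], ?_⟩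
  rw [sq_sum_range_sum_range_pow_two_pow, htr, CharTwo.natCast_eq_ite,
    if_neg (Nat.not_even_iff_odd.mpr hn), add_zero, one_mul, add_comm, ← add_assoc,
    CharTwo.add_self_eq_zero, zero_add]

lemma cube_add_mul_add_one_eq_zero {x y z : R} (hsum : x + y + z = 0) (hprod : x * y * z = 1) :
    x ^ 3 + (x * y + y * z + z * x) * x + 1 = 0 := by
  linear_combination x ^ 2 * hsum + hprod + CharTwo.two_eq_zero (R := R)

end CharTwo

lemma pow_bijective_of_coprime_card_sub_one {K : Type*} [Field K] [Fintype K] {k : ℕ}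
    (hk : k ≠ 0) (hcop : (Fintype.card K - 1).Coprime k) :
    Function.Bijective fun y : K => y ^ k := by
  refine Finite.injective_iff_bijective.mp fun y z hyz => ?_
  rcases eq_or_ne y 0 with rfl | hy
  · exact ((pow_eq_zero_iff hk).mp (hyz.symm.trans (zero_pow hk))).symm
  rcases eq_or_ne z 0 with rfl | hz
  · exact (pow_eq_zero_iff hk).mp (hyz.trans (zero_pow hk))
  have hunits : (Nat.card Kˣ).Coprime k := by rwa [Nat.card_units, Nat.card_eq_fintype_card]
  have := (powCoprime hunits).injective (a₁ := Units.mk0 y hy) (a₂ := Units.mk0 z hz)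
    (Units.ext (by simpa using hyz))
  exact congrArg Units.val this

section Frobenius

variable {K : Type*} [Field K]

lemma apply_eq_self_of_quadratic_eq_zero (φ : K →+* K) {x b c : K} (hb : φ b = b) (hc : φ c = c)
    (hx : x ^ 2 + b * x + c = 0) (h3 : φ (φ (φ x)) = x) : φ x = x := by
  by_contra hne
  have hφx : φ x ^ 2 + b * φ x + c = 0 := by simpa [hb, hc] using congrArg φ hx
  have hsum : x + φ x + b = 0 := by
    have : (x - φ x) * (x + φ x + b) = 0 := by linear_combination hx - hφx
    exact (mul_eq_zero.mp this).resolve_left (sub_ne_zero.mpr (Ne.symm hne))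
  have hφ2 : φ (φ x) = x := by
    have := congrArg φ hsum
    simp only [map_add, hb, map_zero] at this
    linear_combination this - hsum
  exact hne ((congrArg φ hφ2).symm.trans h3)

lemma apply_eq_self_of_cubic_eq_zero (φ : K →+* K) {x a r : K} (ha : φ a = a) (hr : φ r = r)
    (hroot : r ^ 3 + a * r + 1 = 0) (hx : x ^ 3 + a * x + 1 = 0) (h3 : φ (φ (φ x)) = x) :
    φ x = x := by
  rcases eq_or_ne x r with rfl | hxr
  · exact hr
  refine apply_eq_self_of_quadratic_eq_zero φ hr (c := r ^ 2 + a) (by simp [hr, ha]) ?_ h3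
  have : (x - r) * (x ^ 2 + r * x + (r ^ 2 + a)) = 0 := by linear_combination hx - hroot
  exact (mul_eq_zero.mp this).resolve_left (sub_ne_zero.mpr hxr)

variable [CharP K 2]

lemma add_div_cube_add_mul_add_one_eq_zero {a s : K} (hs : s ≠ 0)
    (h : (s ^ 3) ^ 2 + s ^ 3 = a ^ 3) :
    (s + a / s) ^ 3 + a * (s + a / s) + 1 = 0 := by
  field_simp
  linear_combination
    h + (2 * a * s ^ 4 + 2 * a ^ 2 * s ^ 2 + a ^ 3) * CharTwo.two_eq_zero (R := K)

lemma exists_fixed_root_cubic (φ : K →+* K) (hcube : Function.Bijective fun y : K => y ^ 3)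
    {a w : K} (ha : φ a = a) (hw : φ w = w) (hwa : w ^ 2 + w = a ^ 3) :
    ∃ r, φ r = r ∧ r ^ 3 + a * r + 1 = 0 := by
  -- `w` and `w + 1` both solve the Artin–Schreier equation, so one may assume `w ≠ 0`.
  wlog hw0 : w ≠ 0 generalizing w
  · refine this (w := w + 1) (by simp [hw]) ?_ (by simp [not_not.mp hw0])
    linear_combination hwa + (w + 1) * CharTwo.two_eq_zero (R := K)
  obtain ⟨s, rfl⟩ := hcube.surjective w
  have hs : φ s = s := hcube.injective (by simpa [← map_pow] using hw)
  have hs0 : s ≠ 0 := by rintro rfl; simp at hw0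
  exact ⟨s + a / s, by simp [hs, ha], add_div_cube_add_mul_add_one_eq_zero hs0 hwa⟩

end Frobenius

theorem abs_trace_a_cubed_eq_one_general (n q : ℕ) (hn : Odd n)
    (hq : q = 2 ^ n) (hq3 : q % 3 = 2)
    (K : Type) [Field K] [Fintype K] (hK : Fintype.card K = q ^ 3)
    (x : K) (hx : x ≠ 0) (htr : x + x ^ q + x ^ q ^ 2 = 0)
    (hnorm : x ^ (1 + q + q ^ 2) = 1) :
    ∑ i ∈ Finset.range n,
        ((x ^ (1 + q) + (x ^ (1 + q)) ^ q + (x ^ (1 + q)) ^ q ^ 2) ^ 3) ^ 2 ^ i = 1 := by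
  have : CharP K 2 :=
    charP_of_card_eq_prime_pow (f := 3 * n) (by rw [hK, hq, ← pow_mul, mul_comm])
  set φ := iterateFrobenius K 2 n
  have hφ : ∀ y, y ^ q = φ y := fun y => by rw [iterateFrobenius_def, hq]
  have hφ3 : ∀ y, φ (φ (φ y)) = y := fun y => by
    rw [← hφ, ← hφ, ← hφ, ← pow_mul, ← pow_mul, ← pow_three, ← hK, FiniteField.pow_card]
  simp only [pow_add, pow_one, sq, pow_mul, hφ, map_mul, hφ3] at htr hnorm ⊢
  set a := x * φ x + φ x * φ (φ x) + φ (φ x) * x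
  have ha : φ a = a := by simp only [a, map_add, map_mul, hφ3]; ring
  have hxφ : φ x ≠ x := fun h => hx (by simpa [h, CharTwo.add_self_eq_zero] using htr)
  have hcube : Function.Bijective fun y : K => y ^ 3 := by
    refine pow_bijective_of_coprime_card_sub_one three_ne_zero ?_
    have : q ^ 3 % 3 = 2 := by rw [Nat.pow_mod, hq3]
    rw [hK]
    exact (Nat.prime_three.coprime_iff_not_dvd.mpr (by omega)).symm
  have hc : (a ^ 3) ^ 2 ^ n = a ^ 3 := by rw [← hq, hφ, map_pow, ha]
  refine (IsIdempotentElem.iff_eq_zero_or_one.mp (isIdempotentElem_sum_range_pow_two_pow hc)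
    ).resolve_left fun hS => hxφ ?_
  obtain ⟨w, hw, hwa⟩ := exists_fixed_sq_add_self_eq hn φ (by rw [map_pow, ha]) hS
  obtain ⟨r, hr, hroot⟩ := exists_fixed_root_cubic φ hcube ha hw hwa
  exact apply_eq_self_of_cubic_eq_zero φ ha hr hroot (cube_add_mul_add_one_eq_zero htr hnorm)
    (hφ3 x)

theorem abs_trace_a_cubed_eq_one (n q : ℕ) (hn : Odd n) (hn0 : 0 < n)
    (hq : q = 2 ^ n) (hq3 : q % 3 = 2)
    (K : Type) [Field K] [Fintype K] (hK : Fintype.card K = q ^ 3)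
    (x : K) (hx : x ≠ 0) (htr : x + x ^ q + x ^ q ^ 2 = 0)
    (hnorm : x ^ (1 + q + q ^ 2) = 1) :
    ∑ i ∈ Finset.range n,
        ((x ^ (1 + q) + (x ^ (1 + q)) ^ q + (x ^ (1 + q)) ^ q ^ 2) ^ 3) ^ 2 ^ i = 1 :=
  abs_trace_a_cubed_eq_one_general n q hn hq hq3 K hK x hx htr hnorm
end

section
/- Let q ≡ 2 (mod 3) be a prime power and x ∈ F_{q³}* with Tr_{q³/q}(x) = 0 and N_{q³/q}(x) = 1. Set z = x^q - x^{q²}. Then Tr_{q³/q}(z^{1+q}) = 3·Tr_{q³/q}(x^{1+q}). -/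
theorem trace_z_pow_one_add_q (q : ℕ) (hq : q % 3 = 2)
    (K : Type) [Field K] [Fintype K] (hK : Fintype.card K = q ^ 3)
    (x : K) (hx : x ≠ 0) (htr : x + x ^ q + x ^ q ^ 2 = 0)
    (hnorm : x ^ (1 + q + q ^ 2) = 1) :
    (x ^ q - x ^ q ^ 2) ^ (1 + q) + ((x ^ q - x ^ q ^ 2) ^ (1 + q)) ^ q +
        ((x ^ q - x ^ q ^ 2) ^ (1 + q)) ^ q ^ 2 =
      3 * (x ^ (1 + q) + (x ^ (1 + q)) ^ q + (x ^ (1 + q)) ^ q ^ 2) := by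
  set p := ringChar K with hp
  haveI : CharP K p := ringChar.charP K
  obtain ⟨n, hpprime, hcard⟩ := FiniteField.card K p
  haveI : Fact p.Prime := ⟨hpprime⟩
  have hqdvd : q ∣ p ^ (n : ℕ) := by
    rw [← hcard, hK]; exact dvd_pow_self q (by norm_num)
  obtain ⟨k, _, hqk⟩ := (Nat.dvd_prime_pow hpprime).mp hqdvd
  have hsub : ∀ a b : K, (a - b) ^ q = a ^ q - b ^ q := by
    intro a b; rw [hqk]; exact sub_pow_char_pow a b k
  have hmul : ∀ a b : K, (a * b) ^ q = a ^ q * b ^ q := fun a b => mul_pow a b q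
  have hx3 : x ^ q ^ 3 = x := by rw [← hK]; exact FiniteField.pow_card x
  have hpow : ∀ y : K, y ^ q ^ 2 = (y ^ q) ^ q := fun y => by rw [pow_two, pow_mul]
  have hb : (x ^ q) ^ q = x ^ q ^ 2 := (hpow x).symm
  have hc : (x ^ q ^ 2) ^ q = x := by
    rw [← pow_mul, ← pow_succ]; exact hx3
  have e1 : (x ^ q - x ^ q ^ 2) ^ (1 + q) = (x ^ q - x ^ q ^ 2) * (x ^ q ^ 2 - x) := by
    rw [pow_add, pow_one, hsub, hb, hc]
  have e2 : ((x ^ q - x ^ q ^ 2) ^ (1 + q)) ^ q = (x ^ q ^ 2 - x) * (x - x ^ q) := by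
    rw [e1, hmul, hsub, hsub, hb, hc]
  have e3 : ((x ^ q - x ^ q ^ 2) ^ (1 + q)) ^ q ^ 2 = (x - x ^ q) * (x ^ q - x ^ q ^ 2) := by
    have h : ((x ^ q - x ^ q ^ 2) ^ (1 + q)) ^ q ^ 2
        = (((x ^ q - x ^ q ^ 2) ^ (1 + q)) ^ q) ^ q := hpow _
    rw [h, e2, hmul, hsub, hsub, hb, hc]
  have f1 : x ^ (1 + q) = x * x ^ q := by rw [pow_add, pow_one]
  have f2 : (x ^ (1 + q)) ^ q = x ^ q * x ^ q ^ 2 := by rw [f1, hmul, hb]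
  have f3 : (x ^ (1 + q)) ^ q ^ 2 = x ^ q ^ 2 * x := by
    have h : (x ^ (1 + q)) ^ q ^ 2 = ((x ^ (1 + q)) ^ q) ^ q := hpow _
    rw [h, f2, hmul, hb, hc]
  rw [e3, e2, e1, f3, f2, f1]
  linear_combination (-(x + x ^ q + x ^ q ^ 2)) * htr
end

section
/- Let q ≡ 2 (mod 3) be a prime power and x ∈ F_{q³} with Tr_{q³/q}(x) = 0 and N_{q³/q}(x) = 1, and set z = x^q - x^{q²}. Then N_{q³/q}(z)² = -4·Tr_{q³/q}(x^{1+q})³ - 27, i.e., writing e = Tr_{q³/q}(x^{1+q}) and b = N_{q³/q}(z), we have b² = -4e³ - 27 in F_q. -/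
theorem norm_z_sq_eq_discriminant (q : ℕ) (hq : q % 3 = 2)
    (K : Type) [Field K] [Fintype K] (hK : Fintype.card K = q ^ 3)
    (x : K) (htr : x + x ^ q + x ^ q ^ 2 = 0)
    (hnorm : x ^ (1 + q + q ^ 2) = 1) :
    ((x ^ q - x ^ q ^ 2) ^ (1 + q + q ^ 2)) ^ 2 =
      -4 * (x ^ (1 + q) + (x ^ (1 + q)) ^ q + (x ^ (1 + q)) ^ q ^ 2) ^ 3 - 27 := by
  -- q is a power of the characteristic p
  set p := ringChar K with hp
  haveI : CharP K p := ringChar.charP K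
  obtain ⟨n, hprime, hcard⟩ := FiniteField.card K p
  haveI : Fact p.Prime := ⟨hprime⟩
  have hqdvd : q ∣ p ^ (n : ℕ) := by
    rw [← hcard, hK]
    exact dvd_pow_self q (by norm_num)
  obtain ⟨m, hm, hqm⟩ := (Nat.dvd_prime_pow hprime).mp hqdvd
  -- Frobenius-type facts
  have hsub : ∀ u v : K, (u - v) ^ q = u ^ q - v ^ q := by
    intro u v
    rw [hqm]
    exact sub_pow_char_pow u v m
  have hpow3 : x ^ q ^ 3 = x := by
    rw [← hK]
    exact FiniteField.pow_card x
  set a := x with ha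
  set b := x ^ q with hb
  set c := x ^ q ^ 2 with hc
  have hbq : a ^ q = b := rfl
  have hcq : b ^ q = c := by rw [hb, hc, ← pow_mul, ← pow_two]
  have haq : c ^ q = a := by rw [hc, ← pow_mul, ← pow_succ, hpow3]
  -- expand norms via pow_add / pow_mul
  have hexp : ∀ y : K, y ^ (1 + q + q ^ 2) = y * y ^ q * (y ^ q) ^ q := by
    intro y
    rw [pow_add, pow_add, pow_one, pow_two, pow_mul]
  have hnorm' : a * b * c = 1 := by
    have := hnorm
    rw [hexp x, hbq, hcq] at this
    exact this
  have he1 : (x ^ (1 + q)) = a * b := by rw [pow_add, pow_one]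
  have he2 : (x ^ (1 + q)) ^ q = b * c := by
    rw [he1, mul_pow, hbq, hcq]
  have he3 : (x ^ (1 + q)) ^ q ^ 2 = c * a := by
    rw [pow_two, pow_mul, he2, mul_pow, hcq, haq]
  have hz1 : (b - c) ^ q = c - a := by rw [hsub, hcq, haq]
  have hz2 : (b - c) ^ q ^ 2 = a - b := by
    rw [pow_two, pow_mul, hz1, hsub, haq, hbq]
  have hznorm : (x ^ q - x ^ q ^ 2) ^ (1 + q + q ^ 2) = (b - c) * (c - a) * (a - b) := by
    rw [hexp, hz1]
    rw [hsub, haq, hbq]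
  rw [hznorm, he3, he2, he1]
  have hs1 : a + b + c = 0 := htr
  linear_combination ((a + b + c) * (a * b + b * c + c * a) ^ 2 - 4 * (a + b + c) ^ 2 * (a * b * c)
      + 18 * (a * b + b * c + c * a) * (a * b * c)) * hs1 + (-27 * (a * b * c + 1)) * hnorm'
end

section
/- Let q ≡ 2 (mod 3) be a prime power, L₀ = {x ∈ F_{q³}* : Tr_{q³/q}(x) = 0, N_{q³/q}(x) = 1}, and fix u ∈ L₀. Then every element of B_u := {y^{q²}u^q − y^q u^{q²} : y ∈ L₀ \ {u}} lies in F_q*. -/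
theorem Bu_subset_Fq_star (q : ℕ) (hq : q % 3 = 2)
    (K : Type) [Field K] [Fintype K] (hK : Fintype.card K = q ^ 3)
    (u : K) (hu0 : u ≠ 0) (hutr : u + u ^ q + u ^ q ^ 2 = 0)
    (hun : u ^ (1 + q + q ^ 2) = 1)
    (y : K) (hy0 : y ≠ 0) (hytr : y + y ^ q + y ^ q ^ 2 = 0)
    (hyn : y ^ (1 + q + q ^ 2) = 1) (hyu : y ≠ u) :
    y ^ q ^ 2 * u ^ q - y ^ q * u ^ q ^ 2 ≠ 0 ∧
      (y ^ q ^ 2 * u ^ q - y ^ q * u ^ q ^ 2) ^ q =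
        y ^ q ^ 2 * u ^ q - y ^ q * u ^ q ^ 2 := by
  have hq2 : 2 ≤ q := by omega
  -- q is a power of the characteristic
  set p := ringChar K with hp
  haveI : CharP K p := ringChar.charP K
  obtain ⟨n, hpp, hcard⟩ := FiniteField.card K p
  haveI : Fact p.Prime := ⟨hpp⟩
  have h3 : q ^ 3 = p ^ (n : ℕ) := by rw [← hK, hcard]
  have hqdvd : q ∣ p ^ (n : ℕ) := h3 ▸ dvd_pow_self q (by norm_num)
  obtain ⟨k, hk, hqk⟩ := (Nat.dvd_prime_pow hpp).mp hqdvd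
  -- Frobenius-type additivity
  have hfrob : ∀ a b : K, (a - b) ^ q = a ^ q - b ^ q := by
    intro a b
    rw [hqk]
    exact sub_pow_char_pow a b k
  -- x ^ (q^3) = x
  have hcube : ∀ a : K, a ^ q ^ 3 = a := by
    intro a
    rw [← hK]
    exact FiniteField.pow_card a
  constructor
  · -- nonvanishing
    intro h
    have h0 : y ^ q * u = y * u ^ q := by
      linear_combination h + y ^ q * hutr - u ^ q * hytr
    set z := y * u⁻¹ with hz
    have hz0 : z ≠ 0 := mul_ne_zero hy0 (inv_ne_zero hu0)
    have hzq : z ^ q = z := by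
      rw [hz, mul_pow, inv_pow]
      field_simp
      linear_combination h0
    have hzq2 : z ^ q ^ 2 = z := by
      rw [pow_two, pow_mul, hzq, hzq]
    have hz3 : z ^ 3 = 1 := by
      have hn : z ^ (1 + q + q ^ 2) = 1 := by
        rw [hz, mul_pow, inv_pow, hyn, hun]
        norm_num
      calc z ^ 3 = z ^ 1 * z ^ q * z ^ q ^ 2 := by rw [hzq, hzq2]; ring
        _ = z ^ (1 + q + q ^ 2) := by rw [pow_add, pow_add]
        _ = 1 := hn
    have hzq1 : z ^ (q - 1) = 1 := by
      have : z ^ (q - 1) * z = 1 * z := by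
        rw [one_mul, ← pow_succ]
        have : q - 1 + 1 = q := by omega
        rw [this, hzq]
      exact mul_right_cancel₀ hz0 this
    have hd3 : orderOf z ∣ 3 := orderOf_dvd_of_pow_eq_one hz3
    have hdq : orderOf z ∣ q - 1 := orderOf_dvd_of_pow_eq_one hzq1
    have hgcd : Nat.gcd 3 (q - 1) = 1 := by
      have h31 : (q - 1) % 3 = 1 := by omega
      rw [Nat.gcd_rec, h31, Nat.gcd_one_left]
    have h1 : orderOf z = 1 := Nat.eq_one_of_dvd_one (hgcd ▸ Nat.dvd_gcd hd3 hdq)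
    have hz1 : z = 1 := orderOf_eq_one_iff.mp h1
    apply hyu
    have := hz1
    rw [hz] at this
    field_simp at this
    exact this
  · -- fixed by Frobenius
    rw [hfrob, mul_pow, mul_pow, ← pow_mul, ← pow_mul, ← pow_mul, ← pow_mul]
    have e1 : q ^ 2 * q = q ^ 3 := by ring
    have e2 : q * q = q ^ 2 := by ring
    rw [e1, e2, hcube y, hcube u]
    linear_combination u ^ (q ^ 2) * hytr - y ^ (q ^ 2) * hutr
end

section
/- Let q ≡ 2 (mod 3) be a prime power and u ∈ F_{q³} with Tr_{q³/q}(u) = 0 and N_{q³/q}(u) = 1. Then u^{q-1} ∉ F_q. -/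
theorem u_pow_q_sub_one_not_in_Fq (q : ℕ) (hq : q % 3 = 2)
    (K : Type) [Field K] [Fintype K] (hK : Fintype.card K = q ^ 3)
    (u : K) (hutr : u + u ^ q + u ^ q ^ 2 = 0)
    (hun : u ^ (1 + q + q ^ 2) = 1) :
    (u ^ (q - 1)) ^ q ≠ u ^ (q - 1) := by
  intro h
  obtain ⟨a, rfl⟩ : ∃ a, q = a + 1 := ⟨q - 1, by omega⟩
  have hu0 : u ≠ 0 := by
    intro h0
    rw [h0, zero_pow (by positivity)] at hun
    exact zero_ne_one hun
  -- from h derive u ^ ((q-1)^2) = 1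
  rw [← pow_mul] at h
  have hexp : (a + 1 - 1) * (a + 1) = a ^ 2 + (a + 1 - 1) := by
    simp; ring
  rw [hexp, pow_add] at h
  have h1 : u ^ (a ^ 2) = 1 :=
    mul_right_cancel₀ (pow_ne_zero _ hu0) (h.trans (one_mul _).symm)
  have h2 : orderOf u ∣ a ^ 2 := orderOf_dvd_of_pow_eq_one h1
  have h3 : orderOf u ∣ 1 + (a + 1) + (a + 1) ^ 2 := orderOf_dvd_of_pow_eq_one hun
  have hc3 : Nat.Coprime 3 a := (Nat.prime_three.coprime_iff_not_dvd).mpr (by omega)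
  have hcop : Nat.Coprime a (1 + (a + 1) + (a + 1) ^ 2) := by
    have heq : 1 + (a + 1) + (a + 1) ^ 2 = 3 + a * (a + 3) := by ring
    rw [heq]
    exact (Nat.coprime_add_mul_left_right a 3 (a + 3)).mpr hc3.symm
  have hcop2 : Nat.Coprime (a ^ 2) (1 + (a + 1) + (a + 1) ^ 2) :=
    Nat.Coprime.pow_left 2 hcop
  have hord : orderOf u ∣ 1 := by
    have := Nat.dvd_gcd h2 h3
    rwa [hcop2] at this
  have hu1 : u = 1 := by
    rw [← orderOf_eq_one_iff]
    exact Nat.dvd_one.mp hord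
  rw [hu1, one_pow, one_pow] at hutr
  have h3K : (3 : K) = 0 := by norm_num at hutr ⊢; linear_combination hutr
  have hp : (ringChar K).Prime := CharP.char_is_prime K (ringChar K)
  have hpd : ringChar K ∣ 3 := (CharP.cast_eq_zero_iff K (ringChar K) 3).mp h3K
  have hpe : ringChar K = 3 := (Nat.prime_dvd_prime_iff_eq hp Nat.prime_three).mp hpd
  haveI : CharP K 3 := hpe ▸ ringChar.charP K
  obtain ⟨n, -, hcard⟩ := FiniteField.card K 3
  have h3q : (3 : ℕ) ∣ (a + 1) ^ 3 := by
    rw [← hK, hcard]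
    exact dvd_pow_self 3 n.ne_zero
  have := Nat.Prime.dvd_of_dvd_pow Nat.prime_three h3q
  omega
end

section
/- Let q ≡ 2 (mod 3) be a prime power, let C₀ ≤ F_{q³}* be the subgroup of order q² + q + 1, let L₀ = {h ∈ F_{q³}* : Tr_{q³/q}(h) = 0, N_{q³/q}(h) = 1}, and let R = {λ + h^{q²} − h^q : λ ∈ F_q, h ∈ L₀}. Then R is a complete set of coset representatives of F_q* in (F_{q³}* \ F_q*): the map (λ, h) ↦ λ + h^{q²} − h^q is injective on F_q × L₀, no element of R lies in F_q*, and every coset of F_q* in F_{q³}* other than F_q* itself contains exactly one element of R. -/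
/-- `h` belongs to the set `L₀ = {h ∈ F_{q³}* : Tr(h) = 0, N(h) = 1}`. -/
def memL0 (q : ℕ) {K : Type} [Field K] (h : K) : Prop :=
  h ≠ 0 ∧ h + h ^ q + h ^ q ^ 2 = 0 ∧ h ^ (1 + q + q ^ 2) = 1

/-- `r` belongs to the set `R = {λ + h^{q²} − h^q : λ ∈ F_q, h ∈ L₀}`,
where `F_q` is identified with the fixed field of the `q`-power map. -/
def memR (q : ℕ) {K : Type} [Field K] (r : K) : Prop :=
  ∃ l h : K, l ^ q = l ∧ memL0 q h ∧ r = l + h ^ q ^ 2 - h ^ q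

/-!
Let `φ` be the Frobenius `x ↦ x^q`, of order dividing 3; `3 ≠ 0` in `K` since `q ≡ 2 (mod 3)`.
Every `z` splits as `Tr(z)/3 + w` with `Tr(w) = 0`, and `h ↦ h^{q²} - h^q` is a bijection of the
trace-zero hyperplane onto itself. If `z ∉ F_q` its `h` is nonzero, and multiplying `z` by
`c ∈ F_q*` with `c³ = N(h)⁻¹` (cubing is bijective on `F_q*` as `gcd(3, q - 1) = 1`) lands in `R`.
Conversely, if `l₁ + h₁^{q²} - h₁^q = d (l₂ + h₂^{q²} - h₂^q)` with `d ∈ F_q*`, comparing traces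
and then trace-zero parts gives `l₁ = d l₂` and `h₁ = d h₂`, so `d³ = 1` by taking norms, and
`d = 1`.
-/

section PowThree

variable {M : Type*} [Monoid M] {q : ℕ}

theorem eq_one_of_pow_eq_self_of_pow_three_eq_one (hq : q % 3 = 2) {d : M}
    (hdq : d ^ q = d) (hd3 : d ^ 3 = 1) : d = 1 := by
  have hd2 : d ^ 2 = d := by
    rwa [← Nat.div_add_mod q 3, hq, pow_add, pow_mul, hd3, one_pow, one_mul] at hdq
  have hd3' : d ^ 3 = d := by rw [pow_succ, hd2, ← sq, hd2]
  exact hd3'.symm.trans hd3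

theorem exists_pow_three_eq_of_pow_eq_self (hq : q % 3 = 2) {a : M} (haq : a ^ q = a) :
    ∃ c : M, c ^ q = c ∧ c ^ 3 = a := by
  obtain ⟨k, rfl⟩ : ∃ k, q = 3 * k + 2 := ⟨q / 3, by omega⟩
  refine ⟨a ^ (2 * k + 1), by rw [← pow_mul, mul_comm, pow_mul, haq], ?_⟩
  calc (a ^ (2 * k + 1)) ^ 3 = a ^ (3 * k + 2) * a ^ (3 * k + 1) := by
        rw [← pow_mul, ← pow_add]; ring_nf
    _ = a := by rw [haq, ← pow_succ', haq]

end PowThree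

section CyclicOrderThree

variable {K : Type*} [Field K] (φ : K →+* K)

-- For `φ` the Frobenius `x ↦ x^q` of `F_{q³}`, these are `Tr_{q³/q}`, `N_{q³/q}` and
-- `h ↦ h^{q²} - h^q`.
def cycTrace (x : K) : K := x + φ x + φ (φ x)

def cycNorm (x : K) : K := x * φ x * φ (φ x)

def twist (h : K) : K := φ (φ h) - φ h

variable {φ}

theorem cycTrace_add (x y : K) : cycTrace φ (x + y) = cycTrace φ x + cycTrace φ y := by
  simp only [cycTrace, map_add]; ring

theorem cycTrace_of_map_eq {a : K} (ha : φ a = a) : cycTrace φ a = 3 * a := by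
  simp only [cycTrace, ha]; ring

theorem cycTrace_mul_of_map_eq {a : K} (ha : φ a = a) (x : K) :
    cycTrace φ (a * x) = a * cycTrace φ x := by
  simp only [cycTrace, map_mul, ha]; ring

theorem cycNorm_mul_of_map_eq {a : K} (ha : φ a = a) (x : K) :
    cycNorm φ (a * x) = a ^ 3 * cycNorm φ x := by
  simp only [cycNorm, map_mul, ha]; ring

theorem twist_mul_of_map_eq {a : K} (ha : φ a = a) (x : K) :
    twist φ (a * x) = a * twist φ x := by
  simp only [twist, map_mul, ha]; ring

theorem map_cycTrace (hφ : ∀ x, φ (φ (φ x)) = x) (x : K) : φ (cycTrace φ x) = cycTrace φ x := by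
  simp only [cycTrace, map_add, hφ]; ring

theorem map_cycNorm (hφ : ∀ x, φ (φ (φ x)) = x) (x : K) : φ (cycNorm φ x) = cycNorm φ x := by
  simp only [cycNorm, map_mul, hφ]; ring

theorem cycTrace_twist (hφ : ∀ x, φ (φ (φ x)) = x) (h : K) : cycTrace φ (twist φ h) = 0 := by
  simp only [cycTrace, twist, map_sub, hφ]; ring

theorem cycNorm_ne_zero {x : K} (hx : x ≠ 0) : cycNorm φ x ≠ 0 := by
  simp [cycNorm, hx]

theorem twist_eq_of_cycTrace_eq_zero {h : K} (h0 : cycTrace φ h = 0) :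
    twist φ h = -(h + 2 * φ h) := by
  unfold cycTrace at h0; unfold twist; linear_combination h0

-- On trace-zero elements `twist = -(1 + 2φ)` and `(1 + 2φ)² = -3`, so there `twist` is
-- injective with inverse `w ↦ (w + 2φ w) / 3`.
theorem twist_injOn (h3 : (3 : K) ≠ 0) : Set.InjOn (twist φ) {h | cycTrace φ h = 0} := by
  intro h₁ ht₁ h₂ ht₂ heq
  have e : h₁ + 2 * φ h₁ = h₂ + 2 * φ h₂ := by
    rw [twist_eq_of_cycTrace_eq_zero ht₁, twist_eq_of_cycTrace_eq_zero ht₂] at heq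
    exact neg_inj.mp heq
  have e' := congrArg φ e
  simp only [map_add, map_mul, map_ofNat] at e'
  simp only [Set.mem_ofPred_eq, cycTrace] at ht₁ ht₂
  exact mul_left_cancel₀ h3 (by linear_combination 4 * ht₁ - 4 * ht₂ - e - 2 * e')

theorem exists_twist_eq (hφ : ∀ x, φ (φ (φ x)) = x) (h3 : (3 : K) ≠ 0) {w : K}
    (hw : cycTrace φ w = 0) : ∃ h, cycTrace φ h = 0 ∧ twist φ h = w := by
  unfold cycTrace at hw
  refine ⟨(w + 2 * φ w) / 3, ?_, ?_⟩ <;>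
    simp only [cycTrace, twist, map_div₀, map_add, map_mul, map_ofNat, hφ] <;>
    field_simp
  · linear_combination 3 * hw
  · linear_combination -hw

theorem exists_map_eq_add_twist (hφ : ∀ x, φ (φ (φ x)) = x) (h3 : (3 : K) ≠ 0) (z : K) :
    ∃ l h, φ l = l ∧ cycTrace φ h = 0 ∧ z = l + twist φ h := by
  obtain ⟨l, hl3⟩ : ∃ l, 3 * l = cycTrace φ z := ⟨cycTrace φ z / 3, mul_div_cancel₀ _ h3⟩
  have hl : φ l = l := by
    refine mul_left_cancel₀ h3 ?_
    rw [hl3, ← map_ofNat φ 3, ← map_mul, hl3, map_cycTrace hφ]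
  have hw : cycTrace φ (z - l) = 0 := by
    rw [sub_eq_add_neg, cycTrace_add, cycTrace_of_map_eq (a := -l) (by rw [map_neg, hl]), ← hl3]
    ring
  obtain ⟨h, ht, htw⟩ := exists_twist_eq hφ h3 hw
  exact ⟨l, h, hl, ht, by rw [htw]; ring⟩

theorem eq_mul_of_add_twist_eq_mul (hφ : ∀ x, φ (φ (φ x)) = x) (h3 : (3 : K) ≠ 0)
    {d l₁ l₂ h₁ h₂ : K} (hd : φ d = d) (hl₁ : φ l₁ = l₁) (hl₂ : φ l₂ = l₂)
    (ht₁ : cycTrace φ h₁ = 0) (ht₂ : cycTrace φ h₂ = 0)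
    (hN₁ : cycNorm φ h₁ = 1) (hN₂ : cycNorm φ h₂ = 1)
    (heq : l₁ + twist φ h₁ = d * (l₂ + twist φ h₂)) :
    l₁ = d * l₂ ∧ h₁ = d * h₂ ∧ d ^ 3 = 1 := by
  have hl : l₁ = d * l₂ := by
    have htr := congrArg (cycTrace φ) heq
    rw [cycTrace_mul_of_map_eq hd, cycTrace_add, cycTrace_add, cycTrace_of_map_eq hl₁,
      cycTrace_of_map_eq hl₂, cycTrace_twist hφ, cycTrace_twist hφ] at htr
    exact mul_left_cancel₀ h3 (by linear_combination htr)
  have hh : h₁ = d * h₂ := by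
    have ht : cycTrace φ (d * h₂) = 0 := by rw [cycTrace_mul_of_map_eq hd, ht₂, mul_zero]
    refine twist_injOn h3 ht₁ ht ?_
    rw [twist_mul_of_map_eq hd]
    linear_combination heq - hl
  refine ⟨hl, hh, ?_⟩
  have hN := cycNorm_mul_of_map_eq hd h₂
  rwa [← hh, hN₁, hN₂, mul_one, eq_comm] at hN

theorem map_add_twist_ne (hφ : ∀ x, φ (φ (φ x)) = x) (h3 : (3 : K) ≠ 0) {l h : K}
    (hl : φ l = l) (ht : cycTrace φ h = 0) (hN : cycNorm φ h = 1) :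
    φ (l + twist φ h) ≠ l + twist φ h := by
  intro hfix
  have htr := cycTrace_of_map_eq hfix
  rw [cycTrace_add, cycTrace_of_map_eq hl, cycTrace_twist hφ, add_zero] at htr
  have htw : twist φ h = 0 := mul_left_cancel₀ h3 (by linear_combination -htr)
  have h0 : h = 0 := twist_injOn h3 ht (by simp [cycTrace]) (by rw [htw]; simp [twist])
  simp [h0, cycNorm] at hN

theorem exists_mul_eq_add_twist (hφ : ∀ x, φ (φ (φ x)) = x) (h3 : (3 : K) ≠ 0)
    (hcube : ∀ a, φ a = a → ∃ c, φ c = c ∧ c ^ 3 = a) {z : K} (hz : φ z ≠ z) :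
    ∃ c l h, c ≠ 0 ∧ φ c = c ∧ φ l = l ∧ cycTrace φ h = 0 ∧ cycNorm φ h = 1 ∧
      z * c = l + twist φ h := by
  obtain ⟨l, h, hl, ht, rfl⟩ := exists_map_eq_add_twist hφ h3 z
  have hh : h ≠ 0 := by rintro rfl; simp [twist, hl] at hz
  have hN := cycNorm_ne_zero (φ := φ) hh
  obtain ⟨c, hc, hc3⟩ := hcube (cycNorm φ h)⁻¹ (by rw [map_inv₀, map_cycNorm hφ])
  have hc0 : c ≠ 0 := by rintro rfl; exact hN (by simpa using hc3.symm)
  refine ⟨c, c * l, c * h, hc0, hc, by rw [map_mul, hc, hl], ?_, ?_, ?_⟩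
  · rw [cycTrace_mul_of_map_eq hc, ht, mul_zero]
  · rw [cycNorm_mul_of_map_eq hc, hc3, inv_mul_cancel₀ hN]
  · rw [twist_mul_of_map_eq hc]; ring

end CyclicOrderThree

theorem three_ne_zero_of_natCast_eq_zero {R : Type*} [CommRing R] [Nontrivial R] {q : ℕ}
    (hq : q % 3 = 2) (hq0 : (q : R) = 0) : (3 : R) ≠ 0 := by
  intro h3
  have hcast := congrArg (Nat.cast (R := R)) (Nat.div_add_mod q 3)
  rw [hq] at hcast
  push_cast at hcast
  exact one_ne_zero (α := R) (by linear_combination (1 + ((q / 3 : ℕ) : R)) * h3 - hq0 - hcast)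

section FiniteField

variable {K : Type*} [Field K] [Fintype K] {q : ℕ}

theorem exists_ringChar_pow_eq_of_dvd_card (hq : q ∣ Fintype.card K) :
    ∃ m, ringChar K ^ m = q := by
  obtain ⟨n, hp, hcard⟩ := FiniteField.card K (ringChar K)
  obtain ⟨m, -, rfl⟩ := (Nat.dvd_prime_pow hp).mp (hcard ▸ hq)
  exact ⟨m, rfl⟩

theorem exists_ringHom_pow_eq_of_dvd_card (hq : q ∣ Fintype.card K) :
    ∃ φ : K →+* K, ∀ x, φ x = x ^ q := by
  obtain ⟨m, rfl⟩ := exists_ringChar_pow_eq_of_dvd_card hq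
  have : ExpChar K (ringChar K) := ExpChar.prime (CharP.char_is_prime K _)
  exact ⟨iterateFrobenius K (ringChar K) m, iterateFrobenius_def _ _⟩

theorem natCast_eq_zero_of_dvd_card (hq : q ∣ Fintype.card K) (hq1 : q ≠ 1) : (q : K) = 0 := by
  obtain ⟨m, rfl⟩ := exists_ringChar_pow_eq_of_dvd_card hq
  rw [ringChar.spec]
  exact dvd_pow_self _ (by rintro rfl; exact hq1 (pow_zero _))

end FiniteField

section PowerMap

variable {K : Type} [Field K] {φ : K →+* K} {q : ℕ}

theorem pow_sq_eq_map_map (hφq : ∀ x, φ x = x ^ q) (x : K) : x ^ q ^ 2 = φ (φ x) := by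
  rw [hφq, hφq, ← pow_mul, sq]

theorem add_pow_sq_sub_pow_eq (hφq : ∀ x, φ x = x ^ q) (l h : K) :
    l + h ^ q ^ 2 - h ^ q = l + twist φ h := by
  rw [pow_sq_eq_map_map hφq, ← hφq, twist, add_sub_assoc]

theorem memL0_iff (hφq : ∀ x, φ x = x ^ q) {h : K} :
    memL0 q h ↔ cycTrace φ h = 0 ∧ cycNorm φ h = 1 := by
  simp only [memL0, cycTrace, cycNorm, pow_add, pow_one, pow_sq_eq_map_map hφq, ← hφq]
  refine ⟨fun ⟨_, ht, hN⟩ => ⟨ht, hN⟩, fun ⟨ht, hN⟩ => ⟨?_, ht, hN⟩⟩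
  rintro rfl
  simp at hN

theorem memR_iff (hφq : ∀ x, φ x = x ^ q) {r : K} :
    memR q r ↔ ∃ l h, φ l = l ∧ cycTrace φ h = 0 ∧ cycNorm φ h = 1 ∧ r = l + twist φ h := by
  simp only [memR, memL0_iff hφq, add_pow_sq_sub_pow_eq hφq]
  simp only [← hφq, and_assoc]

end PowerMap

theorem R_coset_representatives (q : ℕ) (hq : q % 3 = 2)
    (K : Type) [Field K] [Fintype K] (hK : Fintype.card K = q ^ 3) :
    (∀ l₁ h₁ l₂ h₂ : K, l₁ ^ q = l₁ → l₂ ^ q = l₂ →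
        memL0 q h₁ → memL0 q h₂ →
        l₁ + h₁ ^ q ^ 2 - h₁ ^ q = l₂ + h₂ ^ q ^ 2 - h₂ ^ q →
        l₁ = l₂ ∧ h₁ = h₂) ∧
      (∀ r : K, memR q r → ¬ (r ≠ 0 ∧ r ^ q = r)) ∧
      (∀ z : K, z ≠ 0 → z ^ q ≠ z →
        ∃! r : K, memR q r ∧ ∃ y : K, y ≠ 0 ∧ y ^ q = y ∧ r = z * y) := by
  have hdvd : q ∣ Fintype.card K := hK ▸ dvd_pow_self q three_ne_zero
  obtain ⟨φ, hφq⟩ := exists_ringHom_pow_eq_of_dvd_card hdvd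
  have hφ : ∀ x, φ (φ (φ x)) = x := fun x => by
    rw [hφq, hφq, hφq, ← pow_mul, ← pow_mul, ← pow_three, ← hK, FiniteField.pow_card]
  have h3 : (3 : K) ≠ 0 :=
    three_ne_zero_of_natCast_eq_zero hq (natCast_eq_zero_of_dvd_card hdvd (by omega))
  have hfix : ∀ x : K, x ^ q = x ↔ φ x = x := fun x => by rw [hφq]
  have hroot : ∀ d : K, φ d = d → d ^ 3 = 1 → d = 1 := fun d hd =>
    eq_one_of_pow_eq_self_of_pow_three_eq_one hq ((hfix d).2 hd)
  have hcube : ∀ a : K, φ a = a → ∃ c, φ c = c ∧ c ^ 3 = a := fun a ha => by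
    simpa only [hfix] using exists_pow_three_eq_of_pow_eq_self hq ((hfix a).2 ha)
  refine ⟨?_, ?_, ?_⟩
  · intro l₁ h₁ l₂ h₂ hl₁ hl₂ hh₁ hh₂ heq
    rw [memL0_iff hφq] at hh₁ hh₂
    rw [add_pow_sq_sub_pow_eq hφq, add_pow_sq_sub_pow_eq hφq, ← one_mul (l₂ + _)] at heq
    obtain ⟨hl, hh, -⟩ := eq_mul_of_add_twist_eq_mul hφ h3 (map_one φ) ((hfix _).1 hl₁)
      ((hfix _).1 hl₂) hh₁.1 hh₂.1 hh₁.2 hh₂.2 heq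
    rw [one_mul] at hl hh
    exact ⟨hl, hh⟩
  · rintro r hr ⟨-, hrq⟩
    obtain ⟨l, h, hl, ht, hN, rfl⟩ := (memR_iff hφq).1 hr
    exact map_add_twist_ne hφ h3 hl ht hN ((hfix _).1 hrq)
  · intro z _ hzq
    obtain ⟨c, l, h, hc0, hc, hl, ht, hN, hzc⟩ :=
      exists_mul_eq_add_twist hφ h3 hcube (mt (hfix z).2 hzq)
    refine ⟨z * c, ⟨(memR_iff hφq).2 ⟨l, h, hl, ht, hN, hzc⟩, c, hc0, (hfix c).2 hc, rfl⟩, ?_⟩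
    rintro r ⟨hr, y, -, hy, rfl⟩
    obtain ⟨l', h', hl', ht', hN', hzy⟩ := (memR_iff hφq).1 hr
    have hd : φ (y / c) = y / c := by rw [map_div₀, (hfix y).1 hy, hc]
    obtain ⟨-, -, hd3⟩ := eq_mul_of_add_twist_eq_mul hφ h3 hd hl' hl ht' ht hN' hN
      (by rw [← hzy, ← hzc]; field_simp)
    rw [(div_eq_one_iff_eq hc0).1 (hroot _ hd hd3)]
end

section
/- Let q ≡ 2 (mod 3) be a prime power and x₀ ∈ F_{q³}* with Tr_{q³/q}(x₀) = 0. Then N_{q³/q}(λ + x₀^q − x₀^{q²}) ≠ 0 for every λ ∈ F_q, and the map λ ↦ N_{q³/q}(λ + x₀^q − x₀^{q²}) from F_q to F_q* satisfies Σ_{α ∈ F_q*} #{λ ∈ F_q : N_{q³/q}(λ + x₀^q − x₀^{q²}) = α} = q. -/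
open scoped Classical in
theorem norm_fiber_count (q : ℕ) (hq : q % 3 = 2)
    (K : Type) [Field K] [Fintype K] (hK : Fintype.card K = q ^ 3)
    (x₀ : K) (hx₀ : x₀ ≠ 0) (htr : x₀ + x₀ ^ q + x₀ ^ q ^ 2 = 0) :
    (∀ l : K, l ^ q = l → (l + x₀ ^ q - x₀ ^ q ^ 2) ^ (1 + q + q ^ 2) ≠ 0) ∧
      ∑ α ∈ Finset.univ.filter (fun α : K => α ≠ 0 ∧ α ^ q = α),
          (Finset.univ.filter (fun l : K =>
            l ^ q = l ∧ (l + x₀ ^ q - x₀ ^ q ^ 2) ^ (1 + q + q ^ 2) = α)).card = q := by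
  have hq2 : 2 ≤ q := by omega
  -- characteristic
  set p := ringChar K with hp
  haveI : CharP K p := ringChar.charP K
  have hpprime : p.Prime := CharP.char_is_prime K p
  haveI : Fact p.Prime := ⟨hpprime⟩
  obtain ⟨n, -, hcard⟩ := FiniteField.card K p
  -- q is a power of p
  have hqdvd : q ∣ p ^ (n : ℕ) := by
    rw [← hcard, hK]; exact dvd_pow_self q (by norm_num)
  obtain ⟨m, -, hqm⟩ := (Nat.dvd_prime_pow hpprime).1 hqdvd
  have hfrob : ∀ a b : K, (a - b) ^ q = a ^ q - b ^ q := by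
    intro a b; rw [hqm]; exact sub_pow_char_pow a b m
  have hpow3 : ∀ y : K, y ^ q ^ 3 = y := by
    intro y; rw [← hK]; exact FiniteField.pow_card y
  have hp3 : p ≠ 3 := by
    intro h3
    have hm : m ≠ 0 := by rintro rfl; simp at hqm; omega
    have : 3 ∣ q := by rw [hqm, h3]; exact dvd_pow_self 3 hm
    omega
  -- main nonvanishing
  have hmain : ∀ l : K, l ^ q = l → l + x₀ ^ q - x₀ ^ q ^ 2 ≠ 0 := by
    intro l hl h0
    have hl' : l = x₀ ^ q ^ 2 - x₀ ^ q := by linear_combination h0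
    have h1 : (x₀ ^ q ^ 2 - x₀ ^ q) ^ q = x₀ - x₀ ^ q ^ 2 := by
      rw [hfrob, ← pow_mul, ← pow_mul]
      have e1 : q ^ 2 * q = q ^ 3 := by ring
      have e2 : q * q = q ^ 2 := by ring
      rw [e1, e2, hpow3]
    rw [hl'] at hl
    rw [h1] at hl
    have h3 : (3 : K) * x₀ ^ q ^ 2 = 0 := by linear_combination htr - hl
    have h3ne : (3 : K) ≠ 0 := by
      intro h
      have hdvd3 : p ∣ 3 := (CharP.cast_eq_zero_iff K p 3).1 (by exact_mod_cast h)
      exact hp3 ((Nat.prime_dvd_prime_iff_eq hpprime (by norm_num)).1 hdvd3)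
    have := mul_eq_zero.1 h3
    rcases this with h | h
    · exact h3ne h
    · have hq2ne : q ^ 2 ≠ 0 := by positivity
      exact hx₀ ((pow_eq_zero_iff hq2ne).1 h)
  have part1 : ∀ l : K, l ^ q = l → (l + x₀ ^ q - x₀ ^ q ^ 2) ^ (1 + q + q ^ 2) ≠ 0 :=
    fun l hl => pow_ne_zero _ (hmain l hl)
  refine ⟨part1, ?_⟩
  -- norm lands in F_q*
  have hNfix : ∀ l : K, l ^ q = l →
      ((l + x₀ ^ q - x₀ ^ q ^ 2) ^ (1 + q + q ^ 2)) ^ q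
        = (l + x₀ ^ q - x₀ ^ q ^ 2) ^ (1 + q + q ^ 2) := by
    intro l hl
    set y := l + x₀ ^ q - x₀ ^ q ^ 2 with hy
    rw [← pow_mul]
    have e : (1 + q + q ^ 2) * q = q ^ 3 + (q + q ^ 2) := by ring
    rw [e, pow_add, hpow3, pow_add]
    conv_rhs => rw [pow_add, pow_add, pow_one]
    ring
  -- fiberwise count
  have hmem : ∀ l ∈ Finset.univ.filter (fun l : K => l ^ q = l),
      (l + x₀ ^ q - x₀ ^ q ^ 2) ^ (1 + q + q ^ 2)
        ∈ Finset.univ.filter (fun α : K => α ≠ 0 ∧ α ^ q = α) := by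
    intro l hl
    rw [Finset.mem_filter] at hl ⊢
    exact ⟨Finset.mem_univ _, part1 l hl.2, hNfix l hl.2⟩
  have key := Finset.card_eq_sum_card_fiberwise hmem
  have hrw : ∀ α : K,
      (Finset.univ.filter (fun l : K => l ^ q = l)).filter
        (fun l => (l + x₀ ^ q - x₀ ^ q ^ 2) ^ (1 + q + q ^ 2) = α)
      = Finset.univ.filter (fun l : K =>
          l ^ q = l ∧ (l + x₀ ^ q - x₀ ^ q ^ 2) ^ (1 + q + q ^ 2) = α) := by
    intro α; rw [Finset.filter_filter]
  simp_rw [hrw] at key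
  rw [← key]
  -- count the fixed field
  obtain ⟨g, hg⟩ := IsCyclic.exists_ofOrder_eq_natCard (α := Kˣ)
  have hcardu : Nat.card Kˣ = q ^ 3 - 1 := by
    rw [Nat.card_eq_fintype_card, Fintype.card_units, hK]
  rw [hcardu] at hg
  have hfact : (q - 1) * (1 + q + q ^ 2) + 1 = q ^ 3 := by
    zify [show 1 ≤ q by omega]
    ring
  have hfact' : (1 + q + q ^ 2) * (q - 1) + 1 = q ^ 3 := by
    rw [mul_comm]; exact hfact
  have hdvd : (1 + q + q ^ 2) ∣ q ^ 3 - 1 := ⟨q - 1, by omega⟩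
  have hord : orderOf (g ^ (1 + q + q ^ 2)) = q - 1 := by
    rw [orderOf_pow, hg, Nat.gcd_eq_right hdvd]
    have h2 : q ^ 3 - 1 = (q - 1) * (1 + q + q ^ 2) := by omega
    rw [h2, Nat.mul_div_cancel _ (by positivity)]
  have hprim : IsPrimitiveRoot ((g ^ (1 + q + q ^ 2) : Kˣ) : K) (q - 1) := by
    rw [IsPrimitiveRoot.coe_units_iff, ← hord]
    exact IsPrimitiveRoot.orderOf _
  have hcardroots := hprim.card_nthRootsFinset
  have hset : Finset.univ.filter (fun l : K => l ^ q = l)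
      = insert (0 : K) (Polynomial.nthRootsFinset (q - 1) (1 : K)) := by
    ext x
    rw [Finset.mem_filter, Finset.mem_insert,
      Polynomial.mem_nthRootsFinset (by omega : 0 < q - 1)]
    simp only [Finset.mem_univ, true_and]
    constructor
    · intro hx
      rcases eq_or_ne x 0 with h0 | h0
      · exact Or.inl h0
      · right
        have hq1 : q = (q - 1) + 1 := by omega
        rw [hq1, pow_succ] at hx
        have := mul_right_cancel₀ h0 (hx.trans (one_mul x).symm)
        exact this
    · rintro (rfl | hx)
      · simp [zero_pow (by omega : q ≠ 0)]
      · have hq1 : q = (q - 1) + 1 := by omega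
        rw [hq1, pow_succ, hx, one_mul]
  rw [hset, Finset.card_insert_of_notMem, hcardroots]
  · omega
  · intro h
    have := (Polynomial.mem_nthRootsFinset (by omega : 0 < q - 1) (1 : K)).1 h
    rw [zero_pow (by omega : q - 1 ≠ 0)] at this
    exact zero_ne_one this
end
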